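/- Let p_1,…,p_K, q_1,…,q_K be probability distributions on a finite set S of size |S| = S₀, K, H ≥ 1, and G : S^K → [0,H]. Suppose for each i and each s' ∈ S, |q_i(s') − p_i(s')| ≤ p_i(s')/(2HK) + ε_i for some ε_i ≥ 0. Then ∑_{s}(∏_i q_i(s^i))G(s) − ∑_{s}(∏_i p_i(s^i))G(s) ≤ (1/(2HK))·∑_{i=1}^K Y_{i−1} + H·S₀·∑_{i=1}^K ε_i, where Y_{i−1} = ∑_{s}(∏_{l<i} q_l(s^l))(∏_{m≥i} p_m(s^m)) G(s). -/
import Mathlib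


/-- Hybrid telescoping bound: the gap between expectations under the `q`-product
and the `p`-product is controlled by the hybrid values `Y_{i-1}` plus
coordinatewise errors. -/
theorem stmt_12 {S : Type*} [Fintype S] (K : ℕ) (hK : 1 ≤ K)
    (H : ℝ) (hH : 1 ≤ H)
    (p q : Fin K → S → ℝ)
    (hp0 : ∀ i s, 0 ≤ p i s) (hp1 : ∀ i, ∑ s, p i s = 1)
    (hq0 : ∀ i s, 0 ≤ q i s) (hq1 : ∀ i, ∑ s, q i s = 1)
    (G : (Fin K → S) → ℝ) (hG0 : ∀ s, 0 ≤ G s) (hGH : ∀ s, G s ≤ H)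
    (ε : Fin K → ℝ) (hε : ∀ i, 0 ≤ ε i)
    (hcoord : ∀ (i : Fin K) (s' : S),
      |q i s' - p i s'| ≤ p i s' / (2 * H * K) + ε i)
    (Y : ℕ → ℝ)
    (hY : ∀ j : ℕ, Y j = ∑ s : Fin K → S,
      (∏ l ∈ Finset.univ.filter (fun l : Fin K => (l : ℕ) < j), q l (s l)) *
      (∏ m ∈ Finset.univ.filter (fun m : Fin K => j ≤ (m : ℕ)), p m (s m)) * G s) :
    Y K - Y 0 ≤ (1 / (2 * H * K)) * ∑ i ∈ Finset.range K, Y i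
      + H * (Fintype.card S) * ∑ i : Fin K, ε i := by
  classical
  have hKpos : (0:ℝ) < K := by exact_mod_cast hK
  have hHpos : (0:ℝ) < H := lt_of_lt_of_le one_pos hH
  have inc : ∀ i : Fin K,
      Y ((i:ℕ)+1) - Y (i:ℕ) ≤ (1/(2*H*K)) * Y (i:ℕ) + H * (Fintype.card S) * ε i := by
    intro i
    set Qi : (Fin K → S) → ℝ :=
      fun s => ∏ l ∈ Finset.univ.filter (fun l : Fin K => (l:ℕ) < (i:ℕ)), q l (s l) with hQi
    set Pi : (Fin K → S) → ℝ :=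
      fun s => ∏ m ∈ Finset.univ.filter (fun m : Fin K => (i:ℕ)+1 ≤ (m:ℕ)), p m (s m) with hPi
    have hQnn : ∀ s, 0 ≤ Qi s := fun s => Finset.prod_nonneg fun l _ => hq0 l (s l)
    have hPnn : ∀ s, 0 ≤ Pi s := fun s => Finset.prod_nonneg fun m _ => hp0 m (s m)
    have h1 : (Finset.univ.filter (fun l : Fin K => (l:ℕ) < (i:ℕ)+1))
        = insert i (Finset.univ.filter (fun l : Fin K => (l:ℕ) < (i:ℕ))) := by
      ext l; simp [Fin.ext_iff]; omega
    have h2 : (Finset.univ.filter (fun m : Fin K => (i:ℕ) ≤ (m:ℕ)))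
        = insert i (Finset.univ.filter (fun m : Fin K => (i:ℕ)+1 ≤ (m:ℕ))) := by
      ext m; simp [Fin.ext_iff]; omega
    have hni1 : i ∉ Finset.univ.filter (fun l : Fin K => (l:ℕ) < (i:ℕ)) := by simp
    have hni2 : i ∉ Finset.univ.filter (fun m : Fin K => (i:ℕ)+1 ≤ (m:ℕ)) := by simp
    have hY1 : Y ((i:ℕ)+1) = ∑ s : Fin K → S, Qi s * q i (s i) * Pi s * G s := by
      rw [hY]
      refine Finset.sum_congr rfl fun s _ => ?_
      rw [h1, Finset.prod_insert hni1]; ring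
    have hY0 : Y (i:ℕ) = ∑ s : Fin K → S, Qi s * p i (s i) * Pi s * G s := by
      rw [hY]
      refine Finset.sum_congr rfl fun s _ => ?_
      rw [h2, Finset.prod_insert hni2]; ring
    -- factorization: ∑_s Qi s * Pi s = card S
    set f : Fin K → S → ℝ := fun j x =>
      if j < i then q j x else if i < j then p j x else 1 with hf
    have key : ∀ s : Fin K → S, Qi s * Pi s = ∏ j : Fin K, f j (s j) := by
      intro s
      rw [← Finset.prod_filter_mul_prod_filter_not Finset.univ
        (fun j : Fin K => (j:ℕ) < (i:ℕ)) (fun j => f j (s j))]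
      have e1 : ∏ j ∈ Finset.univ.filter (fun j : Fin K => (j:ℕ) < (i:ℕ)), f j (s j) = Qi s := by
        refine Finset.prod_congr rfl fun j hj => ?_
        simp only [Finset.mem_filter] at hj
        have : j < i := by rw [Fin.lt_def]; exact hj.2
        simp [hf, this]
      have e2 : (Finset.univ.filter (fun j : Fin K => ¬ (j:ℕ) < (i:ℕ)))
          = Finset.univ.filter (fun j : Fin K => (i:ℕ) ≤ (j:ℕ)) := by
        ext j; simp [not_lt]
      have e3 : ∏ j ∈ Finset.univ.filter (fun j : Fin K => ¬ (j:ℕ) < (i:ℕ)), f j (s j)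
          = Pi s := by
        rw [e2, h2, Finset.prod_insert hni2]
        have : f i (s i) = 1 := by simp [hf]
        rw [this, one_mul]
        refine Finset.prod_congr rfl fun j hj => ?_
        simp only [Finset.mem_filter] at hj
        have h1 : ¬ j < i := by rw [Fin.lt_def]; omega
        have h2' : i < j := by rw [Fin.lt_def]; omega
        simp [hf, h1, h2']
      rw [e1, e3]
    have hsum1 : ∑ s : Fin K → S, Qi s * Pi s = (Fintype.card S : ℝ) := by
      have : ∑ s : Fin K → S, Qi s * Pi s = ∑ s : Fin K → S, ∏ j : Fin K, f j (s j) :=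
        Finset.sum_congr rfl fun s _ => key s
      rw [this]
      have hfac : (∏ j : Fin K, ∑ x : S, f j x) = ∑ s : Fin K → S, ∏ j : Fin K, f j (s j) := by
        rw [Finset.prod_univ_sum]
        simp [Fintype.piFinset_univ]
      rw [← hfac]
      rw [Finset.prod_eq_single i]
      · simp [hf, Finset.sum_const, Finset.card_univ]
      · intro j _ hji
        have hne : (j:ℕ) ≠ (i:ℕ) := fun h => hji (Fin.ext h)
        rcases lt_or_gt_of_ne hne with h | h
        · have h' : j < i := by rw [Fin.lt_def]; exact h
          simpa [hf, h'] using hq1 j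
        · have h1 : ¬ j < i := by rw [Fin.lt_def]; omega
          have h2' : i < j := by rw [Fin.lt_def]; omega
          simpa [hf, h1, h2'] using hp1 j
      · intro h; exact absurd (Finset.mem_univ i) h
    -- the increment
    have hdiff : Y ((i:ℕ)+1) - Y (i:ℕ)
        = ∑ s : Fin K → S, Qi s * Pi s * G s * (q i (s i) - p i (s i)) := by
      rw [hY1, hY0, ← Finset.sum_sub_distrib]
      exact Finset.sum_congr rfl fun s _ => by ring
    have step1 : Y ((i:ℕ)+1) - Y (i:ℕ)
        ≤ ∑ s : Fin K → S, Qi s * Pi s * G s * (p i (s i) / (2*H*K) + ε i) := by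
      rw [hdiff]
      refine Finset.sum_le_sum fun s _ => ?_
      have hnn : 0 ≤ Qi s * Pi s * G s :=
        mul_nonneg (mul_nonneg (hQnn s) (hPnn s)) (hG0 s)
      refine mul_le_mul_of_nonneg_left ?_ hnn
      exact le_trans (le_abs_self _) (hcoord i (s i))
    have split : ∑ s : Fin K → S, Qi s * Pi s * G s * (p i (s i) / (2*H*K) + ε i)
        = (1/(2*H*K)) * Y (i:ℕ) + ε i * ∑ s : Fin K → S, Qi s * Pi s * G s := by
      rw [hY0, Finset.mul_sum, Finset.mul_sum, ← Finset.sum_add_distrib]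
      exact Finset.sum_congr rfl fun s _ => by ring
    have hGsum : ∑ s : Fin K → S, Qi s * Pi s * G s ≤ H * (Fintype.card S) := by
      calc ∑ s : Fin K → S, Qi s * Pi s * G s
          ≤ ∑ s : Fin K → S, Qi s * Pi s * H := by
            refine Finset.sum_le_sum fun s _ => ?_
            exact mul_le_mul_of_nonneg_left (hGH s) (mul_nonneg (hQnn s) (hPnn s))
        _ = H * (Fintype.card S) := by
            rw [← Finset.sum_mul, hsum1]; ring
    have last : ε i * ∑ s : Fin K → S, Qi s * Pi s * G s ≤ H * (Fintype.card S) * ε i := by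
      calc ε i * ∑ s : Fin K → S, Qi s * Pi s * G s
          ≤ ε i * (H * (Fintype.card S)) := mul_le_mul_of_nonneg_left hGsum (hε i)
        _ = H * (Fintype.card S) * ε i := by ring
    calc Y ((i:ℕ)+1) - Y (i:ℕ)
        ≤ (1/(2*H*K)) * Y (i:ℕ) + ε i * ∑ s : Fin K → S, Qi s * Pi s * G s := by
          rw [← split]; exact step1
      _ ≤ (1/(2*H*K)) * Y (i:ℕ) + H * (Fintype.card S) * ε i := by linarith
  -- telescoping
  have tele : ∑ j ∈ Finset.range K, (Y (j+1) - Y j) = Y K - Y 0 :=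
    Finset.sum_range_sub Y K
  have conv : ∑ i : Fin K, (Y ((i:ℕ)+1) - Y (i:ℕ)) = ∑ j ∈ Finset.range K, (Y (j+1) - Y j) :=
    Fin.sum_univ_eq_sum_range (fun j => Y (j+1) - Y j) K
  have convY : ∑ i : Fin K, Y (i:ℕ) = ∑ j ∈ Finset.range K, Y j :=
    Fin.sum_univ_eq_sum_range Y K
  calc Y K - Y 0 = ∑ i : Fin K, (Y ((i:ℕ)+1) - Y (i:ℕ)) := by rw [conv, tele]
    _ ≤ ∑ i : Fin K, ((1/(2*H*K)) * Y (i:ℕ) + H * (Fintype.card S) * ε i) :=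
        Finset.sum_le_sum fun i _ => inc i
    _ = (1/(2*H*K)) * ∑ i : Fin K, Y (i:ℕ) + H * (Fintype.card S) * ∑ i : Fin K, ε i := by
        rw [Finset.sum_add_distrib, Finset.mul_sum, Finset.mul_sum]
    _ = (1/(2*H*K)) * ∑ i ∈ Finset.range K, Y i + H * (Fintype.card S) * ∑ i : Fin K, ε i := by
        rw [convY]
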